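/- For all real numbers p, q, r, s, the system −4p + 2p² − 3q² = −4r + 2r² − 3s², −8p − 4p² − 2q² = −8r − 4r² − 2s², p² + q² = 1, r² + s² = 1, together with (p,q) ≠ (r,s), holds if and only if r = p, s = −q, p² + q² = 1 and q ≠ 0. In particular, the system has infinitely many solutions (p,q,r,s). -/
import Mathlib


/-- The closing-equation system for `X = (-6y, 4 - 4x)`, `Y = (-4y, 8 + 8x)`. -/
def closingSys10 (p q r s : ℝ) : Prop :=
  -4 * p + 2 * p ^ 2 - 3 * q ^ 2 = -4 * r + 2 * r ^ 2 - 3 * s ^ 2 ∧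
    -8 * p - 4 * p ^ 2 - 2 * q ^ 2 = -8 * r - 4 * r ^ 2 - 2 * s ^ 2 ∧
    p ^ 2 + q ^ 2 = 1 ∧ r ^ 2 + s ^ 2 = 1 ∧ (p, q) ≠ (r, s)

lemma closingSys10_iff (p q r s : ℝ) :
    closingSys10 p q r s ↔ (r = p ∧ s = -q ∧ p ^ 2 + q ^ 2 = 1 ∧ q ≠ 0) := by
  constructor
  · rintro ⟨h1, h2, h3, h4, h5⟩
    have hpr : r = p := by linear_combination (2*h1 + 5*h2 + 16*h3 - 16*h4) / 48
    subst hpr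
    have hq2 : s ^ 2 = q ^ 2 := by linarith
    have hqs : q ≠ s := fun h => h5 (by rw [h])
    have hs : s = -q := by
      rcases sq_eq_sq_iff_eq_or_eq_neg.mp hq2 with h | h
      · exact absurd h.symm hqs
      · exact h
    subst hs
    exact ⟨rfl, rfl, h3, fun h => hqs (by rw [h]; ring)⟩
  · rintro ⟨hr, hs, h3, hq⟩
    subst hr; subst hs
    refine ⟨by ring, by ring, h3, by linarith [h3], fun h => ?_⟩
    have := (Prod.mk.injEq _ _ _ _).mp h
    have : q = -q := this.2
    exact hq (by linarith)

/-- The system holds iff `r = p`, `s = -q`, `p² + q² = 1` and `q ≠ 0`; in particular it has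
infinitely many solutions. -/
theorem closingSys10_iff_and_infinite :
    (∀ p q r s : ℝ,
      closingSys10 p q r s ↔ (r = p ∧ s = -q ∧ p ^ 2 + q ^ 2 = 1 ∧ q ≠ 0)) ∧
    {x : ℝ × ℝ × ℝ × ℝ | closingSys10 x.1 x.2.1 x.2.2.1 x.2.2.2}.Infinite := by
  refine ⟨closingSys10_iff, ?_⟩
  set f : ℝ → ℝ × ℝ × ℝ × ℝ := fun q => (Real.sqrt (1 - q ^ 2), q, Real.sqrt (1 - q ^ 2), -q)
    with hf
  have hmem : ∀ q ∈ Set.Ioo (0:ℝ) 1, f q ∈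
      {x : ℝ × ℝ × ℝ × ℝ | closingSys10 x.1 x.2.1 x.2.2.1 x.2.2.2} := by
    rintro q ⟨hq0, hq1⟩
    simp only [Set.mem_setOf_eq, hf]
    rw [closingSys10_iff]
    have h1 : (1 : ℝ) - q ^ 2 ≥ 0 := by nlinarith
    refine ⟨rfl, rfl, ?_, ne_of_gt hq0⟩
    rw [Real.sq_sqrt h1]; ring
  have hinj : Set.InjOn f (Set.Ioo (0:ℝ) 1) := by
    intro a _ b _ hab
    have := congrArg (fun x => x.2.1) hab
    simpa using this
  exact ((Set.Ioo_infinite (by norm_num)).image hinj).mono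
    (Set.image_subset_iff.mpr hmem)
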